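/- arXiv:2403.02104 — 4 statements merged into one kernel-verified Lean document; each statement's English description precedes it below -/
import Mathlib

section
/- Let m ≥ 2 be an integer and let u : ℝ^m ∖ {0} → ℝ^{m²} be the Misawa–Nakauchi map with components u_{ij}(x) = (1/√(m(m−1)))(−δ_{ij} + m x_i x_j / r²). Then for every x ∈ ℝ^m ∖ {0} the squared norm of its total derivative satisfies |∇u(x)|² = 2m / r(x)², where |∇u|² = Σ_{k,i,j} (∂_k u_{ij})². -/
/-!
Up to the factor `c * m` with `c = 1 / √(m (m - 1))`, the components are `v_{ij} = x_i x_j / r²`,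
whose gradient is `(x_i e_j + x_j e_i) / r² - 2 x_i x_j x / r⁴`. Writing `a_{kij} = δ_{ik} x_j + δ_{jk} x_i`
and `b_{kij} = x_k x_i x_j`, the sums `∑ a² = 2 (m + 1) r²`, `∑ a b = 2 r⁴` and `∑ b² = r⁶` give
`|∇v|² = (2 (m + 1) - 8 + 4) / r² = 2 (m - 1) / r²`, and `c² m² · 2 (m - 1) = 2 m`.
-/

noncomputable section

/-- Partial derivative of `f` in the `k`-th coordinate direction. -/
def pd {m : ℕ} (k : Fin m) (f : EuclideanSpace ℝ (Fin m) → ℝ)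
    (x : EuclideanSpace ℝ (Fin m)) : ℝ :=
  fderiv ℝ f x (EuclideanSpace.single k 1)

/-- The Misawa–Nakauchi map `u_{ij}(x) = (1/√(m(m−1)))(−δ_{ij} + m xᵢxⱼ/r²)`. -/
def uMN (m : ℕ) (i j : Fin m) (x : EuclideanSpace ℝ (Fin m)) : ℝ :=
  (1 / Real.sqrt ((m : ℝ) * ((m : ℝ) - 1))) *
    (-(if i = j then (1 : ℝ) else 0) + (m : ℝ) * x i * x j / ‖x‖ ^ 2)

open Finset

section

variable {ι : Type*} [Fintype ι]

theorem hasFDerivAt_coord_mul_coord_div_norm_sq {x : EuclideanSpace ℝ ι} (hx : x ≠ 0) (i j : ι) :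
    HasFDerivAt (fun y : EuclideanSpace ℝ ι => y i * y j / ‖y‖ ^ 2)
      ((‖x‖ ^ 2)⁻¹ • (x i • EuclideanSpace.proj j + x j • EuclideanSpace.proj i)
        - (2 * x i * x j / (‖x‖ ^ 2) ^ 2) • innerSL ℝ x) x := by
  have hr : ‖x‖ ^ 2 ≠ 0 := by positivity
  have hcoord (l : ι) : HasFDerivAt (fun y : EuclideanSpace ℝ ι => y l)
      (EuclideanSpace.proj (𝕜 := ℝ) l) x := (EuclideanSpace.proj (𝕜 := ℝ) l).hasFDerivAt
  have hinv := (hasDerivAt_inv hr).comp_hasFDerivAt x (hasStrictFDerivAt_norm_sq x).hasFDerivAt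
  have h : HasFDerivAt (fun y : EuclideanSpace ℝ ι => y i * y j * (‖y‖ ^ 2)⁻¹) _ x :=
    ((hcoord i).mul (hcoord j)).mul hinv
  simp only [← div_eq_mul_inv] at h
  refine h.congr_fderiv ?_
  ext v
  simp only [Pi.mul_apply, neg_smul, smul_neg, smul_add, add_apply,
    neg_apply, smul_apply, sub_apply,
    coe_innerSL_apply, nsmul_eq_mul, Nat.cast_ofNat, smul_eq_mul, PiLp.proj_apply]
  field_simp
  ring

variable [DecidableEq ι]

theorem fderiv_coord_mul_coord_div_norm_sq_single {x : EuclideanSpace ℝ ι} (hx : x ≠ 0) (i j k : ι) :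
    fderiv ℝ (fun y : EuclideanSpace ℝ ι => y i * y j / ‖y‖ ^ 2) x (EuclideanSpace.single k 1) =
      ((if i = k then x j else 0) + (if j = k then x i else 0)) / ‖x‖ ^ 2
        - 2 * x k * x i * x j / (‖x‖ ^ 2) ^ 2 := by
  rw [(hasFDerivAt_coord_mul_coord_div_norm_sq hx i j).fderiv]
  simp only [smul_add, sub_apply, add_apply,
    smul_apply, PiLp.proj_apply, PiLp.single_apply, smul_eq_mul, mul_ite,
    mul_one, mul_zero, coe_innerSL_apply, EuclideanSpace.inner_single_right, Real.ringHom_apply,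
    one_mul]
  split_ifs <;> ring

end

section

variable {ι : Type*} [Fintype ι] (x : ι → ℝ)

theorem sum_sum_sum_cube_sq : ∑ k, ∑ i, ∑ j, (x k * x i * x j) ^ 2 = (∑ l, x l ^ 2) ^ 3 := by
  simp only [mul_pow, ← sum_mul, ← mul_sum]
  ring

variable [DecidableEq ι]

theorem sum_sum_sum_kronecker_sq :
    ∑ k, ∑ i, ∑ j, ((if i = k then x j else 0) + (if j = k then x i else 0)) ^ 2
      = 2 * (Fintype.card ι + 1) * ∑ l, x l ^ 2 := by
  simp only [add_sq, sum_add_distrib, ite_pow, ite_mul, mul_ite, zero_mul, mul_zero, ne_eq,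
    OfNat.ofNat_ne_zero, not_false_eq_true, zero_pow, sum_ite_irrel, sum_const_zero, sum_ite_eq',
    mem_univ, if_true, sum_const, card_univ, nsmul_eq_mul]
  ring_nf
  simp only [← sum_mul]

theorem sum_sum_sum_kronecker_mul_cube :
    ∑ k, ∑ i, ∑ j, ((if i = k then x j else 0) + (if j = k then x i else 0)) * (x k * x i * x j)
      = 2 * (∑ l, x l ^ 2) ^ 2 := by
  simp only [add_mul, sum_add_distrib, ite_mul, zero_mul, sum_ite_irrel, sum_const_zero,
    sum_ite_eq', mem_univ, if_true]
  ring_nf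
  simp only [← sum_mul, ← mul_sum]
  ring

end

theorem sum_sq_fderiv_coord_mul_coord_div_norm_sq {ι : Type*} [Fintype ι] [DecidableEq ι]
    {x : EuclideanSpace ℝ ι} (hx : x ≠ 0) :
    ∑ k, ∑ i, ∑ j,
        (fderiv ℝ (fun y : EuclideanSpace ℝ ι => y i * y j / ‖y‖ ^ 2) x
          (EuclideanSpace.single k 1)) ^ 2
      = 2 * (Fintype.card ι - 1) / ‖x‖ ^ 2 := by
  simp only [fderiv_coord_mul_coord_div_norm_sq_single hx]
  have hr : ‖x‖ ^ 2 ≠ 0 := by positivity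
  set r2 := ‖x‖ ^ 2 with hr2
  have expand (a b c d : ℝ) : (a / r2 - 2 * b * c * d / r2 ^ 2) ^ 2
      = a ^ 2 / r2 ^ 2 - 4 * (a * (b * c * d)) / r2 ^ 3 + 4 * (b * c * d) ^ 2 / r2 ^ 4 := by
    field_simp
    ring
  simp only [expand, sum_add_distrib, sum_sub_distrib, ← sum_div, ← mul_sum,
    sum_sum_sum_kronecker_sq, sum_sum_sum_kronecker_mul_cube, sum_sum_sum_cube_sq,
    ← EuclideanSpace.real_norm_sq_eq, ← hr2]
  field_simp
  ring

theorem pd_uMN {m : ℕ} {x : EuclideanSpace ℝ (Fin m)} (hx : x ≠ 0) (k i j : Fin m) :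
    pd k (uMN m i j) x = 1 / Real.sqrt ((m : ℝ) * ((m : ℝ) - 1)) * m *
      fderiv ℝ (fun y : EuclideanSpace ℝ (Fin m) => y i * y j / ‖y‖ ^ 2) x
        (EuclideanSpace.single k 1) := by
  set c := 1 / Real.sqrt ((m : ℝ) * ((m : ℝ) - 1))
  have hu : uMN m i j = fun y => c * -(if i = j then 1 else 0) + c * m * (y i * y j / ‖y‖ ^ 2) := by
    funext y
    simp only [uMN]
    ring
  rw [pd, hu, fderiv_const_add, fderiv_const_mul
    (hasFDerivAt_coord_mul_coord_div_norm_sq hx i j).differentiableAt]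
  rfl

theorem stmt0 (m : ℕ) (hm : 2 ≤ m) (x : EuclideanSpace ℝ (Fin m)) (hx : x ≠ 0) :
    ∑ k : Fin m, ∑ i : Fin m, ∑ j : Fin m, (pd k (uMN m i j) x) ^ 2
      = 2 * (m : ℝ) / ‖x‖ ^ 2 := by
  have hm1 : (1 : ℝ) < m := by exact_mod_cast hm
  have hm1' : (m : ℝ) - 1 ≠ 0 := (sub_pos.2 hm1).ne'
  have hr : ‖x‖ ^ 2 ≠ 0 := by positivity
  calc ∑ k : Fin m, ∑ i : Fin m, ∑ j : Fin m, (pd k (uMN m i j) x) ^ 2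
      = (1 / Real.sqrt ((m : ℝ) * ((m : ℝ) - 1)) * m) ^ 2 * (2 * ((m : ℝ) - 1) / ‖x‖ ^ 2) := by
        simp only [pd_uMN hx, mul_pow _ (fderiv ℝ _ _ _), ← mul_sum,
          sum_sq_fderiv_coord_mul_coord_div_norm_sq hx, Fintype.card_fin]
    _ = 2 * (m : ℝ) / ‖x‖ ^ 2 := by
        rw [mul_pow, div_pow, Real.sq_sqrt (by nlinarith)]
        field_simp
end
end

section
/- Let m ≥ 2 be an integer and let u : ℝ^m ∖ {0} → ℝ^{m²} be the Misawa–Nakauchi map with components u_{ij}(x) = (1/√(m(m−1)))(−δ_{ij} + m x_i x_j / r²). Then for every x ∈ ℝ^m ∖ {0} and all indices i,j, the componentwise Euclidean Laplacian satisfies Δu_{ij}(x) = −(2m / r(x)²) u_{ij}(x). -/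
noncomputable section

/-- Euclidean Laplacian `Δf = Σ_k ∂²f/∂x_k²`. -/
def lap {m : ℕ} (f : EuclideanSpace ℝ (Fin m) → ℝ)
    (x : EuclideanSpace ℝ (Fin m)) : ℝ :=
  ∑ k : Fin m, pd k (pd k f) x

/-!
Write `u = c (-δ + m P)` with `c` constant and `Pᵢⱼ = xᵢxⱼ/r²` (`lineProj`), the matrix of the
orthogonal projection onto the line `ℝx`. Differentiating twice with `∂ₖ(r⁻²) = -2xₖr⁻⁴` and using
`Σₖ xₖ² = r²` gives `ΔPᵢⱼ = (2/r²)(δᵢⱼ - m Pᵢⱼ)`, hence `Δu = c m ΔP = -(2m/r²) u`.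
-/

open Finset

section PartialDerivative

variable {m : ℕ} (k : Fin m) {f g : EuclideanSpace ℝ (Fin m) → ℝ} {x : EuclideanSpace ℝ (Fin m)}

lemma pd_congr_of_eventuallyEq (h : f =ᶠ[nhds x] g) : pd k f x = pd k g x := by
  rw [pd, pd, h.fderiv_eq]

lemma pd_const (c : ℝ) : pd k (fun _ => c) x = 0 := by
  simp [pd]

lemma pd_const_add (c : ℝ) :
    pd k (fun y => c + f y) = pd k f := by
  funext y
  simp only [pd, fderiv_const_add]

lemma pd_const_mul (a : ℝ) :
    pd k (fun y => a * f y) = fun y => a * pd k f y := by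
  funext y
  simp only [pd]
  rw [show (fun y => a * f y) = a • f from rfl, fderiv_const_smul_field]
  rfl

lemma pd_add (hf : DifferentiableAt ℝ f x) (hg : DifferentiableAt ℝ g x) :
    pd k (fun y => f y + g y) x = pd k f x + pd k g x := by
  simp [pd, fderiv_fun_add hf hg]

lemma pd_sub (hf : DifferentiableAt ℝ f x) (hg : DifferentiableAt ℝ g x) :
    pd k (fun y => f y - g y) x = pd k f x - pd k g x := by
  simp [pd, fderiv_fun_sub hf hg]

lemma pd_mul (hf : DifferentiableAt ℝ f x) (hg : DifferentiableAt ℝ g x) :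
    pd k (fun y => f y * g y) x = pd k f x * g x + f x * pd k g x := by
  simp [pd, fderiv_fun_mul hf hg]
  ring

lemma pd_pow (n : ℕ) (hf : DifferentiableAt ℝ f x) :
    pd k (fun y => f y ^ n) x = n * f x ^ (n - 1) * pd k f x := by
  simp [pd, fderiv_fun_pow n hf]

lemma pd_coord (i : Fin m) :
    pd k (fun y : EuclideanSpace ℝ (Fin m) => y i) x = if i = k then 1 else 0 := by
  have : HasFDerivAt (fun y : EuclideanSpace ℝ (Fin m) => y i) (EuclideanSpace.proj (𝕜 := ℝ) i) x :=
    (EuclideanSpace.proj (𝕜 := ℝ) i).hasFDerivAt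
  simp [pd, this.fderiv, PiLp.single_apply]

lemma lap_const_add_const_mul (c a : ℝ) :
    lap (fun y => c + a * f y) x = a * lap f x := by
  simp only [lap, pd_const_add, pd_const_mul, mul_sum]

end PartialDerivative

section LineProjection

variable {m : ℕ} {x : EuclideanSpace ℝ (Fin m)}

def invNormSq (y : EuclideanSpace ℝ (Fin m)) : ℝ := (‖y‖ ^ 2)⁻¹

lemma hasFDerivAt_invNormSq (hx : x ≠ 0) :
    HasFDerivAt invNormSq (-(((‖x‖ ^ 2) ^ 2)⁻¹ • 2 • innerSL ℝ x)) x := by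
  have h := (hasDerivAt_inv (by positivity : ‖x‖ ^ 2 ≠ 0)).comp_hasFDerivAt x
    (hasFDerivAt_id x).norm_sq
  simp only [Function.comp_def, neg_smul] at h
  exact h

lemma pd_invNormSq (k : Fin m) (hx : x ≠ 0) : pd k invNormSq x = -2 * x k * invNormSq x ^ 2 := by
  rw [pd, (hasFDerivAt_invNormSq hx).fderiv]
  simp [invNormSq, EuclideanSpace.inner_single_right]
  ring

lemma sum_sq_mul_invNormSq (hx : x ≠ 0) : (∑ k, x k ^ 2) * invNormSq x = 1 := by
  rw [← EuclideanSpace.real_norm_sq_eq, invNormSq, mul_inv_cancel₀ (by positivity)]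

def lineProj (i j : Fin m) (y : EuclideanSpace ℝ (Fin m)) : ℝ := y i * y j * invNormSq y

def lineProjPartial (i j k : Fin m) (y : EuclideanSpace ℝ (Fin m)) : ℝ :=
  ((if i = k then 1 else 0) * y j + (if j = k then 1 else 0) * y i) * invNormSq y
    - 2 * y k * y i * y j * invNormSq y ^ 2

lemma pd_lineProj (i j k : Fin m) (hx : x ≠ 0) :
    pd k (lineProj i j) x = lineProjPartial i j k x := by
  have := (hasFDerivAt_invNormSq hx).differentiableAt
  unfold lineProj lineProjPartial
  simp (disch := fun_prop) only [pd_mul, pd_coord, pd_invNormSq k hx]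
  ring

lemma pd_lineProjPartial (i j k : Fin m) (hx : x ≠ 0) :
    pd k (lineProjPartial i j k) x =
      2 * (if i = k then 1 else 0) * (if j = k then 1 else 0) * invNormSq x
        - 4 * x k * ((if i = k then 1 else 0) * x j + (if j = k then 1 else 0) * x i)
          * invNormSq x ^ 2
        - 2 * x i * x j * invNormSq x ^ 2 + 8 * x k ^ 2 * x i * x j * invNormSq x ^ 3 := by
  have := (hasFDerivAt_invNormSq hx).differentiableAt
  unfold lineProjPartial
  simp (disch := fun_prop) only [pd_mul, pd_coord, pd_invNormSq k hx, pd_sub, pd_add, pd_pow,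
    pd_const, ↓reduceIte, Nat.cast_ofNat, Nat.add_one_sub_one, pow_one]
  ring

lemma lap_lineProj (i j : Fin m) (hx : x ≠ 0) :
    lap (lineProj i j) x = 2 * ((if i = j then 1 else 0) - m * lineProj i j x) * invNormSq x := by
  have hpd (k : Fin m) : pd k (pd k (lineProj i j)) x = pd k (lineProjPartial i j k) x := by
    apply pd_congr_of_eventuallyEq
    filter_upwards [eventually_ne_nhds hx] with y hy using pd_lineProj i j k hy
  simp only [lap, hpd, pd_lineProjPartial _ _ _ hx]
  simp only [mul_ite, mul_one, mul_zero, ite_mul, zero_mul, one_mul, mul_add, sum_add_distrib,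
    sum_sub_distrib, sum_ite_eq, mem_univ, ↓reduceIte, ← sum_mul, sum_const, card_univ,
    Fintype.card_fin, nsmul_eq_mul, ← mul_sum]
  rw [lineProj]
  split_ifs <;> linear_combination (8 * x i * x j * invNormSq x ^ 2) * sum_sq_mul_invNormSq hx

lemma uMN_eq_lineProj (i j : Fin m) :
    uMN m i j = fun y => 1 / √(m * (m - 1)) * -(if i = j then 1 else 0)
      + 1 / √(m * (m - 1)) * m * lineProj i j y := by
  funext y
  simp only [uMN, lineProj, invNormSq]
  ring

end LineProjection

theorem stmt1_general (m : ℕ) (x : EuclideanSpace ℝ (Fin m)) (hx : x ≠ 0)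
    (i j : Fin m) :
    lap (uMN m i j) x = -(2 * (m : ℝ) / ‖x‖ ^ 2) * uMN m i j x := by
  rw [uMN_eq_lineProj, lap_const_add_const_mul, lap_lineProj i j hx]
  simp only [lineProj, invNormSq]
  ring

theorem stmt1 (m : ℕ) (hm : 2 ≤ m) (x : EuclideanSpace ℝ (Fin m)) (hx : x ≠ 0)
    (i j : Fin m) :
    lap (uMN m i j) x = -(2 * (m : ℝ) / ‖x‖ ^ 2) * uMN m i j x :=
  stmt1_general m x hx i j
end
end

section
/- Let m ≥ 5 be an integer, let u : ℝ^m ∖ {0} → ℝ^{m²} be the Misawa–Nakauchi map, let α ∈ (0, π/2) satisfy sin²α = 1 − 2/m, and define ũ(x) = (sin α · u(x), cos α). Then ∫_{B^m} |Δũ|² dx = (4m(m−2)/(m−4)) · vol(𝕊^{m−1}) and ∫_{B^m} |∇ũ|² dx = 2 · vol(𝕊^{m−1}), where B^m is the open unit ball in ℝ^m and vol(𝕊^{m−1}) is the (m−1)-dimensional surface measure of the unit sphere in ℝ^m; in particular ũ lies in W^{2,2}(B^m, ℝ^{m²+1}). -/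
noncomputable section

open Real MeasureTheory

/-- Squared norm of the total derivative: `|∇w|² = Σ_{k,a} (∂_k w_a)²`. -/
def gradSq {m : ℕ} {ι : Type*} [Fintype ι]
    (w : ι → EuclideanSpace ℝ (Fin m) → ℝ) (x : EuclideanSpace ℝ (Fin m)) : ℝ :=
  ∑ k : Fin m, ∑ a : ι, (pd k (w a) x) ^ 2

/-- The rotated map `ũ_α = (sin α · u, cos α)`, with values in `ℝ^{m²+1} = ℝ^{m²} × ℝ`. -/
def uTilde (m : ℕ) (α : ℝ) :
    (Fin m × Fin m) ⊕ Unit → EuclideanSpace ℝ (Fin m) → ℝ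
  | Sum.inl p => fun x => Real.sin α * uMN m p.1 p.2 x
  | Sum.inr _ => fun _ => Real.cos α

/-- The open unit ball in `ℝ^m`. -/
def unitBall (m : ℕ) : Set (EuclideanSpace ℝ (Fin m)) := Metric.ball 0 1

/-- The surface measure of the unit sphere `𝕊^{m−1} ⊂ ℝ^m`. -/
def sphereVol (m : ℕ) : ℝ :=
  ((volume : Measure (EuclideanSpace ℝ (Fin m))).toSphere Set.univ).toReal

/-!
Write `ν = x / |x|`. The Misawa–Nakauchi map is `u = κ (−I + m ν νᵀ)` with `κ = 1/√(m(m−1))`, so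
all its derivatives are those of the entries `q_ij = x_i x_j / |x|²` of the orthogonal projection
onto `ℝx`. These satisfy `Δq_ij = (2δ_ij − 2m ν_i ν_j)/|x|²`, `Σ |∇q_ij|² = 2(m−1)/|x|²` and
`|∂_k ∂_l q_ij| ≤ 20/|x|²`, whence `|u| = 1`, `|∇u|² = 2m/|x|²` and `|Δu|² = 4m²/|x|⁴`. With
`sin²α = (m−2)/m` this gives `|∇ũ|² = 2(m−2)/|x|²` and `|Δũ|² = 4m(m−2)/|x|⁴`, and in polar
coordinates `∫_{B^m} |x|^{-n} dx = vol(𝕊^{m−1})/(m−n)` for `n < m`; the Laplacian needs `m > 4`.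
-/

namespace MisawaNakauchi

open Filter Topology

local notation "δ[" i ", " j "]" => (if i = j then (1 : ℝ) else 0)

variable {m : ℕ}

section PartialDerivatives

lemma _root_.HasFDerivAt.div {F : Type*} [NormedAddCommGroup F] [NormedSpace ℝ F]
    {f g : F → ℝ} {f' g' : F →L[ℝ] ℝ} {x : F} (hf : HasFDerivAt f f' x)
    (hg : HasFDerivAt g g' x) (hx : g x ≠ 0) :
    HasFDerivAt (fun y => f y / g y) ((g x)⁻¹ • f' - (f x / g x ^ 2) • g') x := by
  have e : (fun y => f y / g y) = f * ((·⁻¹) ∘ g) := by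
    funext y
    simp [div_eq_mul_inv]
  rw [e]
  refine (hf.mul ((hasDerivAt_inv hx).comp_hasFDerivAt x hg)).congr_fderiv ?_
  ext v
  simp only [neg_smul, smul_neg, Function.comp_apply, add_apply, neg_apply, smul_apply,
    smul_eq_mul, sub_apply]
  field_simp
  ring

lemma _root_.HasFDerivAt.pd_eq {f : EuclideanSpace ℝ (Fin m) → ℝ}
    {D : EuclideanSpace ℝ (Fin m) →L[ℝ] ℝ} {x : EuclideanSpace ℝ (Fin m)}
    (h : HasFDerivAt f D x) (k : Fin m) : pd k f x = D (EuclideanSpace.single k 1) := by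
  rw [pd, h.fderiv]

lemma pd_congr {f g : EuclideanSpace ℝ (Fin m) → ℝ} {x : EuclideanSpace ℝ (Fin m)}
    (h : f =ᶠ[𝓝 x] g) (k : Fin m) : pd k f x = pd k g x := by
  rw [pd, pd, h.fderiv_eq]

lemma pd_const (c : ℝ) (k : Fin m) :
    pd k (fun _ : EuclideanSpace ℝ (Fin m) => c) = fun _ => 0 := by
  funext y
  simp [pd]

lemma pd_const_mul (c : ℝ) (f : EuclideanSpace ℝ (Fin m) → ℝ) (k : Fin m) :
    pd k (fun y => c * f y) = fun y => c * pd k f y := by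
  funext y
  change fderiv ℝ (c • f) y _ = _
  rw [fderiv_const_smul_field]
  rfl

lemma pd_const_add (c : ℝ) (f : EuclideanSpace ℝ (Fin m) → ℝ) (k : Fin m) :
    pd k (fun y => c + f y) = pd k f := by
  funext y
  rw [pd, pd, fderiv_const_add]

@[fun_prop]
lemma measurable_pd (k : Fin m) (f : EuclideanSpace ℝ (Fin m) → ℝ) : Measurable (pd k f) :=
  measurable_fderiv_apply_const ℝ f _

lemma proj_single (i k : Fin m) :
    EuclideanSpace.proj (𝕜 := ℝ) i (EuclideanSpace.single k 1) = δ[i, k] := by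
  simp [PiLp.single_apply]

lemma innerSL_single (x : EuclideanSpace ℝ (Fin m)) (k : Fin m) :
    innerSL ℝ x (EuclideanSpace.single k 1) = x k := by
  simp [EuclideanSpace.inner_single_right]

lemma hasFDerivAt_coord (i : Fin m) (x : EuclideanSpace ℝ (Fin m)) :
    HasFDerivAt (fun y : EuclideanSpace ℝ (Fin m) => y i) (EuclideanSpace.proj (𝕜 := ℝ) i) x :=
  (EuclideanSpace.proj (𝕜 := ℝ) i).hasFDerivAt

lemma hasFDerivAt_norm_sq (x : EuclideanSpace ℝ (Fin m)) :
    HasFDerivAt (fun y : EuclideanSpace ℝ (Fin m) => ‖y‖ ^ 2) (2 • innerSL ℝ x) x :=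
  (hasStrictFDerivAt_norm_sq x).hasFDerivAt

lemma hasFDerivAt_norm_pow_four (x : EuclideanSpace ℝ (Fin m)) :
    HasFDerivAt (fun y : EuclideanSpace ℝ (Fin m) => ‖y‖ ^ 4)
      ((2 * ‖x‖ ^ 2) • 2 • innerSL ℝ x) x := by
  simpa [← pow_mul] using (hasFDerivAt_norm_sq x).pow 2

end PartialDerivatives

section KroneckerSums

lemma sum_sum_sq_kron_add (v : EuclideanSpace ℝ (Fin m)) (A B : ℝ) :
    ∑ i, ∑ j, (δ[i, j] * A + v i * v j * B) ^ 2
      = m * A ^ 2 + 2 * A * B * ‖v‖ ^ 2 + B ^ 2 * (‖v‖ ^ 2) ^ 2 := by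
  have hrow : ∀ i, ∑ j, (δ[i, j] * A + v i * v j * B) ^ 2
      = B ^ 2 * v i ^ 2 * ‖v‖ ^ 2 + (A ^ 2 + 2 * A * B * v i ^ 2) := by
    intro i
    have hterm : ∀ j, (δ[i, j] * A + v i * v j * B) ^ 2
        = B ^ 2 * v i ^ 2 * v j ^ 2 + (if i = j then A ^ 2 + 2 * A * B * v i ^ 2 else 0) := by
      intro j
      split_ifs with h
      · subst h; ring
      · ring
    simp only [hterm, Finset.sum_add_distrib, ← Finset.mul_sum, Finset.sum_ite_eq,
      Finset.mem_univ, if_true, EuclideanSpace.real_norm_sq_eq]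
  simp only [hrow, Finset.sum_add_distrib, ← Finset.sum_mul, ← Finset.mul_sum,
    Finset.sum_const, Finset.card_univ, Fintype.card_fin, nsmul_eq_mul,
    ← EuclideanSpace.real_norm_sq_eq]
  ring

lemma sum_sum_sum_sq_kron_mul_sub (v : EuclideanSpace ℝ (Fin m)) (a c : ℝ) :
    ∑ k, ∑ i, ∑ j, ((δ[i, k] * v j + δ[j, k] * v i) * a - 2 * (v i * v j * v k) * c) ^ 2
      = (2 * m + 2) * a ^ 2 * ‖v‖ ^ 2 - 8 * a * c * (‖v‖ ^ 2) ^ 2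
        + 4 * c ^ 2 * (‖v‖ ^ 2) ^ 3 := by
  have hrow : ∀ k i, ∑ j, ((δ[i, k] * v j + δ[j, k] * v i) * a - 2 * (v i * v j * v k) * c) ^ 2
      = δ[i, k] * ((a ^ 2 - 4 * a * c * v i * v k) * ‖v‖ ^ 2 + 2 * a ^ 2 * v i * v k)
        + (a ^ 2 * v i ^ 2 - 4 * a * c * v i ^ 2 * v k ^ 2)
        + 4 * c ^ 2 * v i ^ 2 * v k ^ 2 * ‖v‖ ^ 2 := by
    intro k i
    have hterm : ∀ j, ((δ[i, k] * v j + δ[j, k] * v i) * a - 2 * (v i * v j * v k) * c) ^ 2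
        = δ[i, k] * (a ^ 2 - 4 * a * c * v i * v k) * v j ^ 2
          + (if j = k then a ^ 2 * v i ^ 2 + 2 * δ[i, k] * a ^ 2 * v i * v k
              - 4 * a * c * v i ^ 2 * v k ^ 2 else 0)
          + 4 * c ^ 2 * v i ^ 2 * v k ^ 2 * v j ^ 2 := by
      intro j
      by_cases hik : i = k <;> by_cases hjk : j = k <;>
        simp only [hik, hjk, if_true, if_false] <;> (try subst hik) <;> (try subst hjk) <;> ring
    simp only [hterm, Finset.sum_add_distrib, ← Finset.mul_sum, Finset.sum_ite_eq',
      Finset.mem_univ, if_true, EuclideanSpace.real_norm_sq_eq]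
    ring
  have hcol : ∀ k, ∑ i, ∑ j,
      ((δ[i, k] * v j + δ[j, k] * v i) * a - 2 * (v i * v j * v k) * c) ^ 2
      = (2 * a ^ 2 - 8 * a * c * ‖v‖ ^ 2 + 4 * c ^ 2 * (‖v‖ ^ 2) ^ 2) * v k ^ 2
        + 2 * a ^ 2 * ‖v‖ ^ 2 := by
    intro k
    rw [Finset.sum_congr rfl fun i _ => hrow k i]
    simp only [Finset.sum_add_distrib, Finset.sum_sub_distrib, ← Finset.sum_mul,
      ← Finset.mul_sum, ite_mul, one_mul, zero_mul, Finset.sum_ite_eq', Finset.mem_univ, if_true,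
      ← EuclideanSpace.real_norm_sq_eq]
    ring
  simp only [hcol, Finset.sum_add_distrib, ← Finset.mul_sum, Finset.sum_const, Finset.card_univ,
    Fintype.card_fin, nsmul_eq_mul, ← EuclideanSpace.real_norm_sq_eq]
  ring

end KroneckerSums

section RadialProjection

def radialProj (i j : Fin m) (x : EuclideanSpace ℝ (Fin m)) : ℝ := x i * x j / ‖x‖ ^ 2

def radialProjDeriv (i j k : Fin m) (x : EuclideanSpace ℝ (Fin m)) : ℝ :=
  (δ[i, k] * x j + δ[j, k] * x i) / ‖x‖ ^ 2 - 2 * (x i * x j * x k) / ‖x‖ ^ 4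

def radialProjHess (i j k l : Fin m) (ν : EuclideanSpace ℝ (Fin m)) : ℝ :=
  δ[i, k] * δ[j, l] + δ[j, k] * δ[i, l] - 2 * (δ[i, k] * ν j + δ[j, k] * ν i) * ν l
    - 2 * (δ[i, l] * (ν j * ν k) + δ[j, l] * (ν i * ν k) + δ[k, l] * (ν i * ν j))
    + 8 * (ν i * ν j * ν k * ν l)

variable {x : EuclideanSpace ℝ (Fin m)}

lemma pd_radialProj (hx : x ≠ 0) (i j k : Fin m) :
    pd k (radialProj i j) x = radialProjDeriv i j k x := by
  have hr : ‖x‖ ≠ 0 := norm_ne_zero_iff.mpr hx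
  have hD : HasFDerivAt (radialProj i j) _ x :=
    ((hasFDerivAt_coord i x).mul (hasFDerivAt_coord j x)).div (hasFDerivAt_norm_sq x)
      (pow_ne_zero 2 hr)
  rw [hD.pd_eq, radialProjDeriv]
  simp only [sub_apply, add_apply, FunLike.coe_smul, Pi.smul_apply, proj_single, innerSL_single,
    smul_eq_mul, Pi.mul_apply]
  split_ifs <;> field_simp <;> ring

lemma pd_radialProjDeriv (hx : x ≠ 0) (i j k l : Fin m) :
    pd l (radialProjDeriv i j k) x = radialProjHess i j k l (‖x‖⁻¹ • x) / ‖x‖ ^ 2 := by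
  have hr : ‖x‖ ≠ 0 := norm_ne_zero_iff.mpr hx
  have hP := (((hasFDerivAt_coord j x).const_mul δ[i, k]).add
    ((hasFDerivAt_coord i x).const_mul δ[j, k])).div (hasFDerivAt_norm_sq x) (pow_ne_zero 2 hr)
  have hQ := ((((hasFDerivAt_coord i x).mul (hasFDerivAt_coord j x)).mul
    (hasFDerivAt_coord k x)).const_mul 2).div (hasFDerivAt_norm_pow_four x) (pow_ne_zero 4 hr)
  have hD : HasFDerivAt (radialProjDeriv i j k) _ x := hP.sub hQ
  rw [hD.pd_eq, radialProjHess]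
  simp only [sub_apply, add_apply, FunLike.coe_smul, Pi.smul_apply, proj_single, innerSL_single,
    smul_eq_mul, Pi.mul_apply, Pi.add_apply, PiLp.smul_apply]
  split_ifs <;> field_simp <;> ring

lemma pd_pd_radialProj (hx : x ≠ 0) (i j k l : Fin m) :
    pd l (pd k (radialProj i j)) x = radialProjHess i j k l (‖x‖⁻¹ • x) / ‖x‖ ^ 2 := by
  rw [pd_congr (eventually_ne_nhds hx |>.mono fun y hy => pd_radialProj hy i j k),
    pd_radialProjDeriv hx]

lemma sum_radialProjHess_diag (ν : EuclideanSpace ℝ (Fin m)) (i j : Fin m) :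
    ∑ k, radialProjHess i j k k ν = 2 * δ[i, j] + (8 * ‖ν‖ ^ 2 - 8 - 2 * m) * (ν i * ν j) := by
  have hterm : ∀ k, radialProjHess i j k k ν
      = δ[i, k] * (2 * δ[j, k] - 4 * ν j * ν k) + δ[j, k] * (-4 * ν i * ν k)
        + (8 * ν i * ν j * ν k ^ 2 - 2 * ν i * ν j) := by
    intro k
    simp only [radialProjHess, if_true]
    split_ifs <;> ring
  simp only [hterm, Finset.sum_add_distrib, Finset.sum_sub_distrib, ite_mul, one_mul, zero_mul,
    Finset.sum_ite_eq, Finset.mem_univ, if_true, ← Finset.mul_sum, Finset.sum_const,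
    Finset.card_univ, Fintype.card_fin, nsmul_eq_mul, EuclideanSpace.real_norm_sq_eq]
  have hδ : δ[j, i] = δ[i, j] := by simp only [eq_comm]
  rw [hδ]
  ring

lemma lap_radialProj (hx : x ≠ 0) (i j : Fin m) :
    lap (radialProj i j) x = 2 * δ[i, j] / ‖x‖ ^ 2 - 2 * m * (x i * x j) / ‖x‖ ^ 4 := by
  have hr : ‖x‖ ≠ 0 := norm_ne_zero_iff.mpr hx
  have hν : ‖‖x‖⁻¹ • x‖ = 1 := by rw [norm_smul, norm_inv, norm_norm, inv_mul_cancel₀ hr]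
  rw [lap, Finset.sum_congr rfl fun k _ => pd_pd_radialProj hx i j k k, ← Finset.sum_div,
    sum_radialProjHess_diag, hν]
  simp only [PiLp.smul_apply, smul_eq_mul]
  field_simp
  ring

lemma abs_radialProjHess_le {ν : EuclideanSpace ℝ (Fin m)} (hν : ‖ν‖ ≤ 1) (i j k l : Fin m) :
    |radialProjHess i j k l ν| ≤ 20 := by
  have hcoord : ∀ a, |ν a| ≤ 1 := fun a => (PiLp.norm_apply_le ν a).trans hν
  have hδ : ∀ a b : Fin m, |δ[a, b]| ≤ 1 := by
    intro a b
    split_ifs <;> simp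
  have hmul : ∀ p q : ℝ, |p| ≤ 1 → |q| ≤ 1 → |p * q| ≤ 1 := fun p q hp hq => by
    rw [abs_mul]
    exact mul_le_one₀ hp (abs_nonneg q) hq
  have b1 := abs_le.mp (hmul _ _ (hδ i k) (hδ j l))
  have b2 := abs_le.mp (hmul _ _ (hδ j k) (hδ i l))
  have b3 := abs_le.mp (hmul _ _ (hmul _ _ (hδ i k) (hcoord j)) (hcoord l))
  have b4 := abs_le.mp (hmul _ _ (hmul _ _ (hδ j k) (hcoord i)) (hcoord l))
  have b5 := abs_le.mp (hmul _ _ (hδ i l) (hmul _ _ (hcoord j) (hcoord k)))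
  have b6 := abs_le.mp (hmul _ _ (hδ j l) (hmul _ _ (hcoord i) (hcoord k)))
  have b7 := abs_le.mp (hmul _ _ (hδ k l) (hmul _ _ (hcoord i) (hcoord j)))
  have b8 := abs_le.mp (hmul _ _ (hmul _ _ (hmul _ _ (hcoord i) (hcoord j)) (hcoord k))
    (hcoord l))
  rw [radialProjHess, abs_le]
  constructor <;> linarith

lemma sum_sum_sum_sq_pd_radialProj (hx : x ≠ 0) :
    ∑ k, ∑ i, ∑ j, pd k (radialProj i j) x ^ 2 = 2 * (m - 1) / ‖x‖ ^ 2 := by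
  have hr : ‖x‖ ≠ 0 := norm_ne_zero_iff.mpr hx
  have hform : ∀ k i j, pd k (radialProj i j) x
      = (δ[i, k] * x j + δ[j, k] * x i) * (‖x‖ ^ 2)⁻¹ - 2 * (x i * x j * x k) * (‖x‖ ^ 4)⁻¹ := by
    intro k i j
    rw [pd_radialProj hx, radialProjDeriv]
    ring
  simp only [hform, sum_sum_sum_sq_kron_mul_sub]
  field_simp
  ring

lemma sum_sum_sq_lap_radialProj (hx : x ≠ 0) :
    ∑ i, ∑ j, lap (radialProj i j) x ^ 2 = 4 * m * (m - 1) / ‖x‖ ^ 4 := by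
  have hr : ‖x‖ ≠ 0 := norm_ne_zero_iff.mpr hx
  have hform : ∀ i j, lap (radialProj i j) x
      = δ[i, j] * (2 / ‖x‖ ^ 2) + x i * x j * (-(2 * m) / ‖x‖ ^ 4) := by
    intro i j
    rw [lap_radialProj hx]
    ring
  simp only [hform, sum_sum_sq_kron_add]
  field_simp
  ring

end RadialProjection

section MisawaNakauchiMap

def mnConst (m : ℕ) : ℝ := 1 / Real.sqrt ((m : ℝ) * ((m : ℝ) - 1))

lemma mnConst_sq_mul (hm : 2 ≤ m) : mnConst m ^ 2 * ((m : ℝ) * ((m : ℝ) - 1)) = 1 := by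
  have hm' : (2 : ℝ) ≤ m := by exact_mod_cast hm
  have hpos : (0 : ℝ) < m * (m - 1) := by nlinarith
  rw [mnConst, div_pow, one_pow, Real.sq_sqrt hpos.le, one_div_mul_cancel hpos.ne']

lemma uMN_eq (i j : Fin m) :
    uMN m i j = fun x => mnConst m * -δ[i, j] + mnConst m * m * radialProj i j x := by
  funext x
  simp only [uMN, mnConst, radialProj]
  ring

lemma pd_uMN (i j k : Fin m) :
    pd k (uMN m i j) = fun x => mnConst m * m * pd k (radialProj i j) x := by
  rw [uMN_eq, pd_const_add, pd_const_mul]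

lemma pd_pd_uMN (i j k l : Fin m) (x : EuclideanSpace ℝ (Fin m)) :
    pd l (pd k (uMN m i j)) x = mnConst m * m * pd l (pd k (radialProj i j)) x := by
  rw [pd_uMN, pd_const_mul]

lemma lap_uMN (i j : Fin m) (x : EuclideanSpace ℝ (Fin m)) :
    lap (uMN m i j) x = mnConst m * m * lap (radialProj i j) x := by
  simp only [lap, pd_pd_uMN, Finset.mul_sum]

variable {x : EuclideanSpace ℝ (Fin m)}

lemma sum_sum_sq_uMN (hm : 2 ≤ m) (hx : x ≠ 0) : ∑ i, ∑ j, uMN m i j x ^ 2 = 1 := by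
  have hr : ‖x‖ ≠ 0 := norm_ne_zero_iff.mpr hx
  have hform : ∀ i j, uMN m i j x
      = δ[i, j] * -mnConst m + x i * x j * (mnConst m * m / ‖x‖ ^ 2) := by
    intro i j
    simp only [uMN_eq, radialProj]
    ring
  simp only [hform, sum_sum_sq_kron_add]
  field_simp
  linear_combination mnConst_sq_mul hm

lemma gradSq_uMN (hm : 2 ≤ m) (hx : x ≠ 0) :
    gradSq (fun p : Fin m × Fin m => uMN m p.1 p.2) x = 2 * m / ‖x‖ ^ 2 := by
  simp only [gradSq, Fintype.sum_prod_type, pd_uMN, mul_pow, ← Finset.mul_sum,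
    sum_sum_sum_sq_pd_radialProj hx]
  linear_combination 2 * m / ‖x‖ ^ 2 * mnConst_sq_mul hm

lemma sum_sum_sq_lap_uMN (hm : 2 ≤ m) (hx : x ≠ 0) :
    ∑ i, ∑ j, lap (uMN m i j) x ^ 2 = 4 * m ^ 2 / ‖x‖ ^ 4 := by
  simp only [lap_uMN, mul_pow, ← Finset.mul_sum, sum_sum_sq_lap_radialProj hx]
  linear_combination 4 * m ^ 2 / ‖x‖ ^ 4 * mnConst_sq_mul hm

lemma abs_pd_pd_uMN_le (hx : x ≠ 0) (i j k l : Fin m) :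
    |pd l (pd k (uMN m i j)) x| ≤ 20 * (mnConst m * m) / ‖x‖ ^ 2 := by
  have hr : 0 < ‖x‖ := norm_pos_iff.mpr hx
  have hν : ‖‖x‖⁻¹ • x‖ ≤ 1 := by
    rw [norm_smul, norm_inv, norm_norm, inv_mul_cancel₀ hr.ne']
  have hc : 0 ≤ mnConst m * m := by unfold mnConst; positivity
  rw [pd_pd_uMN, pd_pd_radialProj hx, abs_mul, abs_of_nonneg hc, abs_div,
    abs_of_pos (by positivity : 0 < ‖x‖ ^ 2), mul_div_assoc', mul_comm 20]
  gcongr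
  exact abs_radialProjHess_le hν i j k l

end MisawaNakauchiMap

section RotatedMap

variable (α : ℝ)

lemma pd_uTilde_inl (p : Fin m × Fin m) (k : Fin m) :
    pd k (uTilde m α (Sum.inl p)) = fun x => Real.sin α * pd k (uMN m p.1 p.2) x :=
  pd_const_mul _ _ k

lemma pd_uTilde_inr (u : Unit) (k : Fin m) : pd k (uTilde m α (Sum.inr u)) = fun _ => 0 :=
  pd_const _ k

lemma sum_sq_uTilde (hm : 2 ≤ m) {x : EuclideanSpace ℝ (Fin m)} (hx : x ≠ 0) :
    ∑ a, uTilde m α a x ^ 2 = 1 := by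
  simp only [Fintype.sum_sum_type, Fintype.sum_prod_type, uTilde, mul_pow, ← Finset.mul_sum,
    sum_sum_sq_uMN hm hx, Finset.univ_unique, Finset.sum_singleton]
  rw [mul_one, sin_sq_add_cos_sq]

lemma gradSq_uTilde (x : EuclideanSpace ℝ (Fin m)) :
    gradSq (uTilde m α) x = Real.sin α ^ 2 * gradSq (fun p : Fin m × Fin m => uMN m p.1 p.2) x := by
  simp [gradSq, Fintype.sum_sum_type, pd_uTilde_inl, pd_uTilde_inr, mul_pow, Finset.mul_sum]

lemma sum_sq_lap_uTilde (x : EuclideanSpace ℝ (Fin m)) :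
    ∑ a, lap (uTilde m α a) x ^ 2 = Real.sin α ^ 2 * ∑ i, ∑ j, lap (uMN m i j) x ^ 2 := by
  simp only [Fintype.sum_sum_type, Fintype.sum_prod_type, lap, pd_uTilde_inl, pd_uTilde_inr,
    pd_const_mul, pd_const, ← Finset.mul_sum, mul_pow]
  simp

variable {α}

lemma sum_sq_lap_uTilde_of_sin_sq (hm : 2 ≤ m) (hsin : Real.sin α ^ 2 = 1 - 2 / (m : ℝ))
    {x : EuclideanSpace ℝ (Fin m)} (hx : x ≠ 0) :
    ∑ a, lap (uTilde m α a) x ^ 2 = 4 * m * (m - 2) * (‖x‖ ^ 4)⁻¹ := by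
  have hm' : (m : ℝ) ≠ 0 := by positivity
  rw [sum_sq_lap_uTilde, sum_sum_sq_lap_uMN hm hx, hsin]
  field_simp

lemma gradSq_uTilde_of_sin_sq (hm : 2 ≤ m) (hsin : Real.sin α ^ 2 = 1 - 2 / (m : ℝ))
    {x : EuclideanSpace ℝ (Fin m)} (hx : x ≠ 0) :
    gradSq (uTilde m α) x = 2 * (m - 2) * (‖x‖ ^ 2)⁻¹ := by
  have hm' : (m : ℝ) ≠ 0 := by positivity
  rw [gradSq_uTilde, gradSq_uMN hm hx, hsin]
  field_simp

variable (α)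

lemma sq_pd_pd_uTilde_le {x : EuclideanSpace ℝ (Fin m)} (hx : x ≠ 0) (k l : Fin m)
    (a : (Fin m × Fin m) ⊕ Unit) :
    pd l (pd k (uTilde m α a)) x ^ 2 ≤ (20 * (mnConst m * m) / ‖x‖ ^ 2) ^ 2 := by
  rcases a with p | u
  · rw [pd_uTilde_inl, pd_const_mul, mul_pow, ← sq_abs (pd l _ x)]
    calc Real.sin α ^ 2 * |pd l (pd k (uMN m p.1 p.2)) x| ^ 2
        ≤ 1 * |pd l (pd k (uMN m p.1 p.2)) x| ^ 2 := by gcongr; exact sin_sq_le_one α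
      _ ≤ (20 * (mnConst m * m) / ‖x‖ ^ 2) ^ 2 := by
        rw [one_mul]
        gcongr
        exact abs_pd_pd_uMN_le hx p.1 p.2 k l
  · simp only [pd_uTilde_inr, pd_const, ne_eq, OfNat.ofNat_ne_zero, not_false_eq_true, zero_pow]
    positivity

lemma exists_sum_sq_pd_pd_uTilde_le : ∃ C, ∀ x : EuclideanSpace ℝ (Fin m), x ≠ 0 →
    ∑ k, ∑ l, ∑ a, pd l (pd k (uTilde m α a)) x ^ 2 ≤ C * (‖x‖ ^ 4)⁻¹ := by
  refine ⟨m * m * (m * m + 1) * (20 * (mnConst m * m)) ^ 2, fun x hx => ?_⟩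
  calc ∑ k, ∑ l, ∑ a, pd l (pd k (uTilde m α a)) x ^ 2
      ≤ ∑ _k : Fin m, ∑ _l : Fin m, ∑ _a : (Fin m × Fin m) ⊕ Unit,
          (20 * (mnConst m * m) / ‖x‖ ^ 2) ^ 2 :=
        Finset.sum_le_sum fun k _ => Finset.sum_le_sum fun l _ =>
          Finset.sum_le_sum fun a _ => sq_pd_pd_uTilde_le α hx k l a
    _ = _ := by
        simp only [Finset.sum_const, Finset.card_univ, Fintype.card_sum, Fintype.card_prod,
          Fintype.card_fin, Fintype.card_unit, nsmul_eq_mul]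
        push_cast
        ring

end RotatedMap

section Integration

lemma setIntegral_unitBall_fun_norm (hm : 0 < m) (f : ℝ → ℝ) :
    ∫ x in unitBall m, f ‖x‖ = sphereVol m * ∫ r in Set.Ioo 0 1, r ^ (m - 1) * f r := by
  have : Nonempty (Fin m) := ⟨⟨0, hm⟩⟩
  have hind : ∫ x in unitBall m, f ‖x‖
      = ∫ x : EuclideanSpace ℝ (Fin m), (Set.Iio (1 : ℝ)).indicator f ‖x‖ := by
    rw [unitBall, ← integral_indicator measurableSet_ball]
    congr 1
    funext x
    simp only [Set.indicator, Metric.mem_ball, dist_zero_right, Set.mem_Iio]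
  have hradial : ∫ r in Set.Ioi (0 : ℝ), r ^ (m - 1) • (Set.Iio (1 : ℝ)).indicator f r
      = ∫ r in Set.Ioo 0 1, r ^ (m - 1) * f r := by
    rw [← Set.indicator_smul, setIntegral_indicator measurableSet_Iio, Set.Ioi_inter_Iio]
    rfl
  rw [hind, integral_fun_norm_addHaar, finrank_euclideanSpace_fin, hradial, sphereVol,
    Measure.toSphere_apply_univ, finrank_euclideanSpace_fin, measureReal_def]
  simp [mul_assoc]

lemma ae_ne_zero_unitBall (hm : 0 < m) :
    ∀ᵐ x ∂(volume.restrict (unitBall m)), x ≠ (0 : EuclideanSpace ℝ (Fin m)) :=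
  have : Nonempty (Fin m) := ⟨⟨0, hm⟩⟩
  ae_restrict_of_ae (Measure.ae_ne volume 0)

lemma integral_unitBall_inv_norm_pow {n : ℕ} (hn : n < m) :
    ∫ x in unitBall m, (‖x‖ ^ n)⁻¹ = sphereVol m / (m - n) := by
  have hpow : ∀ r ∈ Set.Ioo (0 : ℝ) 1, r ^ (m - 1) * (r ^ n)⁻¹ = r ^ (m - 1 - n) :=
    fun r hr => (pow_sub₀ r hr.1.ne' (by omega)).symm
  have hexp : ((m - 1 - n : ℕ) : ℝ) + 1 = m - n := by
    rw [Nat.sub_sub, Nat.cast_sub (by omega)]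
    push_cast
    ring
  rw [setIntegral_unitBall_fun_norm (by omega) (fun r => (r ^ n)⁻¹),
    setIntegral_congr_fun measurableSet_Ioo hpow, ← integral_Ioc_eq_integral_Ioo,
    ← intervalIntegral.integral_of_le zero_le_one, integral_pow, hexp]
  simp [div_eq_mul_inv]

lemma integrableOn_unitBall_inv_norm_pow {n : ℕ} (hn : n < m) :
    IntegrableOn (fun x : EuclideanSpace ℝ (Fin m) => (‖x‖ ^ n)⁻¹) (unitBall m) := by
  refine integrableOn_ball_of_norm_le_rpow (C := 1) (α := n) (by simp; omega) (by simpa using hn)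
    (ae_of_all _ fun x => ?_) (by fun_prop)
  rw [one_mul, Real.rpow_neg (norm_nonneg x), Real.rpow_natCast,
    Real.norm_of_nonneg (by positivity)]

end Integration

end MisawaNakauchi

open MisawaNakauchi in
theorem stmt6_general (m : ℕ) (hm : 5 ≤ m) (α : ℝ)
    (hsin : Real.sin α ^ 2 = 1 - 2 / (m : ℝ)) :
    (∫ x in unitBall m, ∑ a : (Fin m × Fin m) ⊕ Unit, (lap (uTilde m α a) x) ^ 2)
        = (4 * (m : ℝ) * ((m : ℝ) - 2) / ((m : ℝ) - 4)) * sphereVol m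
      ∧ (∫ x in unitBall m, gradSq (uTilde m α) x) = 2 * sphereVol m
      ∧ IntegrableOn
          (fun x => ∑ a : (Fin m × Fin m) ⊕ Unit, (uTilde m α a x) ^ 2) (unitBall m)
      ∧ IntegrableOn (fun x => gradSq (uTilde m α) x) (unitBall m)
      ∧ IntegrableOn
          (fun x => ∑ k : Fin m, ∑ l : Fin m, ∑ a : (Fin m × Fin m) ⊕ Unit,
            (pd l (pd k (uTilde m α a)) x) ^ 2) (unitBall m) := by
  have hm' : (5 : ℝ) ≤ m := by exact_mod_cast hm
  have hne := ae_ne_zero_unitBall (m := m) (by omega)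
  have hlap : (fun x => ∑ a, lap (uTilde m α a) x ^ 2) =ᵐ[volume.restrict (unitBall m)]
      fun x => 4 * m * (m - 2) * (‖x‖ ^ 4)⁻¹ :=
    hne.mono fun x hx => sum_sq_lap_uTilde_of_sin_sq (by omega) hsin hx
  have hgrad : (fun x => gradSq (uTilde m α) x) =ᵐ[volume.restrict (unitBall m)]
      fun x => 2 * (m - 2) * (‖x‖ ^ 2)⁻¹ :=
    hne.mono fun x hx => gradSq_uTilde_of_sin_sq (by omega) hsin hx
  obtain ⟨C, hC⟩ := exists_sum_sq_pd_pd_uTilde_le α (m := m)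
  refine ⟨?_, ?_, ?_, ?_, ?_⟩
  · rw [integral_congr_ae hlap, integral_const_mul, integral_unitBall_inv_norm_pow (by omega)]
    push_cast
    ring
  · rw [integral_congr_ae hgrad, integral_const_mul, integral_unitBall_inv_norm_pow (by omega)]
    have : (m : ℝ) - 2 ≠ 0 := by linarith
    push_cast
    field_simp
  · exact (integrableOn_const (measure_ball_lt_top (x := 0) (r := 1)).ne).congr
      (hne.mono fun x hx => (sum_sq_uTilde α (by omega) hx).symm)
  · exact ((integrableOn_unitBall_inv_norm_pow (by omega)).const_mul _).congr hgrad.symm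
  · refine ((integrableOn_unitBall_inv_norm_pow (n := 4) (by omega)).const_mul C).mono'
      (by fun_prop) (hne.mono fun x hx => ?_)
    rw [Real.norm_of_nonneg (by positivity)]
    exact hC x hx

theorem stmt6 (m : ℕ) (hm : 5 ≤ m) (α : ℝ) (hα : α ∈ Set.Ioo 0 (π / 2))
    (hsin : Real.sin α ^ 2 = 1 - 2 / (m : ℝ)) :
    (∫ x in unitBall m, ∑ a : (Fin m × Fin m) ⊕ Unit, (lap (uTilde m α a) x) ^ 2)
        = (4 * (m : ℝ) * ((m : ℝ) - 2) / ((m : ℝ) - 4)) * sphereVol m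
      ∧ (∫ x in unitBall m, gradSq (uTilde m α) x) = 2 * sphereVol m
      ∧ IntegrableOn
          (fun x => ∑ a : (Fin m × Fin m) ⊕ Unit, (uTilde m α a x) ^ 2) (unitBall m)
      ∧ IntegrableOn (fun x => gradSq (uTilde m α) x) (unitBall m)
      ∧ IntegrableOn
          (fun x => ∑ k : Fin m, ∑ l : Fin m, ∑ a : (Fin m × Fin m) ⊕ Unit,
            (pd l (pd k (uTilde m α a)) x) ^ 2) (unitBall m) :=
  stmt6_general m hm α hsin
end
end

section
/- Let m be an integer with 5 ≤ m ≤ 12 and set V(ρ) = (1 − ρ²)^m for ρ ∈ [0,1]. Then ∫_{B^m} ( V''(r) + (m−1)V'(r)/r + 2(m−4)V(r)/r² )² dx + 32(2−m) ∫_{B^m} V(r)²/r⁴ dx < 0, where r = r(x) = |x| and B^m is the open unit ball in ℝ^m. (This quantity is the second variation of the bienergy at the proper biharmonic map ũ of Theorem 1.1 in the direction determined by V, so ũ is an unstable critical point of the bienergy.) -/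
/-!
In polar coordinates both integrals become integrals over `(0, 1)` with weight `r ^ (m - 1)`.
Writing `t = 1 - r²`, the first radial integrand factors as
`r ^ (m - 5) t ^ (2m - 4) (4m(m-1) - 2m(5m-4) t + 2(m+1)(3m-4) t²)²` and the second one is
`r ^ (m - 5) t ^ (2m)`, so the whole quantity is a combination of the moments
`J(a, b) = ∫₀¹ r^a (1 - r²)^b dr` with `a = m - 5`. Integration by parts gives
`(a + 2b + 3) J(a, b + 1) = 2(b + 1) J(a, b)`, which collapses the combination to
`16 m (m-1) Q(m) / (5 (5m-4)(5m-6)(5m-8)) · J(m - 5, 2m - 4)` with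
`Q(m) = m⁵ - 19m⁴ + 146m³ - 952m² + 1408m - 384`, and `Q < 0` on `[5, 12]`.
-/

noncomputable section

open Real MeasureTheory

/-- The test function `V(ρ) = (1 − ρ²)^m`. -/
def Vtest (m : ℕ) (ρ : ℝ) : ℝ := (1 - ρ ^ 2) ^ m

lemma hasDerivAt_one_sub_sq (ρ : ℝ) : HasDerivAt (fun x : ℝ => 1 - x ^ 2) (-2 * ρ) ρ := by
  simpa using (hasDerivAt_pow 2 ρ).const_sub 1

lemma deriv_Vtest (m : ℕ) :
    deriv (Vtest m) = fun ρ : ℝ => -2 * (m : ℝ) * ρ * (1 - ρ ^ 2) ^ (m - 1) := by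
  ext ρ
  have h : HasDerivAt (Vtest m) _ ρ := (hasDerivAt_one_sub_sq ρ).pow m
  rw [h.deriv]
  ring

lemma deriv_deriv_Vtest (m : ℕ) :
    deriv (deriv (Vtest m)) = fun ρ : ℝ =>
      -2 * (m : ℝ) * (1 - ρ ^ 2) ^ (m - 1) + 4 * m * (m - 1 : ℕ) * ρ ^ 2 * (1 - ρ ^ 2) ^ (m - 2) := by
  ext ρ
  have h : HasDerivAt (fun ρ : ℝ => -2 * (m : ℝ) * ρ * (1 - ρ ^ 2) ^ (m - 1)) _ ρ :=
    ((hasDerivAt_id' ρ).const_mul (-2 * m : ℝ)).mul ((hasDerivAt_one_sub_sq ρ).pow (m - 1))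
  rw [deriv_Vtest, h.deriv, Nat.sub_sub]
  ring

lemma Vtest_radial_operator_eq {m : ℕ} (hm : 2 ≤ m) {r : ℝ} (hr : r ≠ 0) :
    deriv (deriv (Vtest m)) r + ((m : ℝ) - 1) * deriv (Vtest m) r / r
        + 2 * ((m : ℝ) - 4) * Vtest m r / r ^ 2
      = (1 - r ^ 2) ^ (m - 2) / r ^ 2 * (4 * m * (m - 1) - 2 * m * (5 * m - 4) * (1 - r ^ 2)
          + 2 * (m + 1) * (3 * m - 4) * (1 - r ^ 2) ^ 2) := by
  obtain ⟨k, rfl⟩ := Nat.exists_eq_add_of_le' hm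
  rw [deriv_deriv_Vtest, deriv_Vtest]
  simp only [Vtest, Nat.add_sub_cancel, Nat.reduceSubDiff]
  push_cast
  field_simp
  ring

section Polar

variable {E : Type*} [NormedAddCommGroup E] [NormedSpace ℝ E] [Nontrivial E]
  [FiniteDimensional ℝ E] [MeasurableSpace E] [BorelSpace E] (μ : Measure E) [μ.IsAddHaarMeasure]

lemma setIntegral_ball_fun_norm (f : ℝ → ℝ) :
    ∫ x in Metric.ball (0 : E) 1, f ‖x‖ ∂μ
      = Module.finrank ℝ E * μ.real (Metric.ball 0 1)
          * ∫ r in (0 : ℝ)..1, r ^ (Module.finrank ℝ E - 1) * f r := by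
  have hind : (Metric.ball (0 : E) 1).indicator (fun x => f ‖x‖)
      = fun x => (Set.Iio 1).indicator f ‖x‖ := by
    ext x
    by_cases hx : ‖x‖ < 1 <;> simp [Set.indicator, hx]
  rw [← integral_indicator measurableSet_ball, hind, integral_fun_norm_addHaar μ,
    intervalIntegral.integral_of_le zero_le_one, integral_Ioc_eq_integral_Ioo,
    ← Set.Ioi_inter_Iio, ← setIntegral_indicator measurableSet_Iio]
  simp only [nsmul_eq_mul, smul_eq_mul, mul_assoc]
  congr 3
  ext r
  by_cases hr : r < 1 <;> simp [Set.indicator, hr]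

end Polar

section BetaMoment

/-- `betaMoment a b = B((a + 1) / 2, b + 1) / 2`, via the substitution `s = r²`. -/
def betaMoment (a b : ℕ) : ℝ := ∫ r in (0 : ℝ)..1, r ^ a * (1 - r ^ 2) ^ b

lemma betaMoment_pos (a b : ℕ) : 0 < betaMoment a b := by
  refine intervalIntegral.intervalIntegral_pos_of_pos_on
    (Continuous.intervalIntegrable (by fun_prop) _ _) (fun r hr => ?_) zero_lt_one
  have : 0 < 1 - r ^ 2 := by nlinarith [hr.1, hr.2]
  have := hr.1
  positivity

lemma hasDerivAt_pow_mul_one_sub_sq_pow (a b : ℕ) (r : ℝ) :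
    HasDerivAt (fun r : ℝ => r ^ (a + 1) * (1 - r ^ 2) ^ (b + 1))
      ((a + 2 * b + 3) * (r ^ a * (1 - r ^ 2) ^ (b + 1)) - 2 * (b + 1) * (r ^ a * (1 - r ^ 2) ^ b))
      r := by
  have h : HasDerivAt (fun r : ℝ => r ^ (a + 1) * (1 - r ^ 2) ^ (b + 1)) _ r :=
    (hasDerivAt_pow (a + 1) r).mul ((hasDerivAt_one_sub_sq r).pow (b + 1))
  convert h using 1
  simp only [Nat.add_sub_cancel]
  push_cast
  ring

/-- Integration by parts against `r ^ (a + 1) (1 - r²) ^ (b + 1)`, which vanishes at `0` and `1`. -/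
lemma betaMoment_succ_right (a b : ℕ) :
    betaMoment a (b + 1) = 2 * (b + 1) / (a + 2 * b + 3) * betaMoment a b := by
  have hint : ∀ c, IntervalIntegrable (fun r : ℝ => r ^ a * (1 - r ^ 2) ^ c) volume 0 1 :=
    fun c => Continuous.intervalIntegrable (by fun_prop) _ _
  have hftc := intervalIntegral.integral_eq_sub_of_hasDerivAt
    (fun r _ => hasDerivAt_pow_mul_one_sub_sq_pow a b r)
    (((hint _).const_mul _).sub ((hint _).const_mul _))
  rw [intervalIntegral.integral_sub ((hint _).const_mul _) ((hint _).const_mul _),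
    intervalIntegral.integral_const_mul, intervalIntegral.integral_const_mul] at hftc
  simp only [one_pow, sub_self, zero_pow (Nat.succ_ne_zero _), mul_zero, sub_zero] at hftc
  unfold betaMoment
  field_simp
  linarith

lemma betaMoment_add_right (a b k : ℕ) :
    betaMoment a (b + k)
      = (∏ j ∈ Finset.range k, 2 * (((b + j : ℕ) : ℝ) + 1) / (a + 2 * ((b + j : ℕ) : ℝ) + 3))
          * betaMoment a b := by
  induction k with
  | zero => simp
  | succ k ih =>
    rw [← add_assoc, betaMoment_succ_right, ih, Finset.prod_range_succ]
    ring

lemma integral_pow_mul_one_sub_sq_pow_mul_sum (a b : ℕ) {k : ℕ} (c : Fin k → ℝ) :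
    ∫ r in (0 : ℝ)..1, r ^ a * (1 - r ^ 2) ^ b * ∑ i, c i * (1 - r ^ 2) ^ (i : ℕ)
      = (∑ i, c i * ∏ j ∈ Finset.range i,
          2 * (((b + j : ℕ) : ℝ) + 1) / (a + 2 * ((b + j : ℕ) : ℝ) + 3)) * betaMoment a b := by
  simp_rw [Finset.mul_sum, Finset.sum_mul]
  rw [intervalIntegral.integral_finsetSum fun i _ => Continuous.intervalIntegrable (by fun_prop) _ _]
  refine Finset.sum_congr rfl fun i _ => ?_
  rw [mul_assoc, ← betaMoment_add_right, betaMoment, ← intervalIntegral.integral_const_mul]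
  congr 1
  ext r
  ring

end BetaMoment

section Radial

/-- The coefficients of `(4m(m-1) - 2m(5m-4) t + 2(m+1)(3m-4) t²)²` in powers of `t`. -/
def radialCoeffs (m : ℝ) : Fin 5 → ℝ :=
  ![(4 * m * (m - 1)) ^ 2, 2 * (4 * m * (m - 1)) * (-2 * m * (5 * m - 4)),
    (-2 * m * (5 * m - 4)) ^ 2 + 2 * (4 * m * (m - 1)) * (2 * (m + 1) * (3 * m - 4)),
    2 * (-2 * m * (5 * m - 4)) * (2 * (m + 1) * (3 * m - 4)), (2 * (m + 1) * (3 * m - 4)) ^ 2]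

variable {m : ℕ}

lemma ne_zero_of_mem_uIoo_zero_one {r : ℝ} (hr : r ∈ Set.uIoo 0 1) : r ≠ 0 := by
  rw [Set.uIoo_of_le zero_le_one] at hr
  exact hr.1.ne'

lemma integral_radial_operator_sq (hm : 5 ≤ m) :
    ∫ r in (0 : ℝ)..1, r ^ (m - 1) * (deriv (deriv (Vtest m)) r
        + ((m : ℝ) - 1) * deriv (Vtest m) r / r + 2 * ((m : ℝ) - 4) * Vtest m r / r ^ 2) ^ 2
      = ∫ r in (0 : ℝ)..1, r ^ (m - 5) * (1 - r ^ 2) ^ (2 * m - 4) * ∑ i,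
          radialCoeffs m i * (1 - r ^ 2) ^ (i : ℕ) := by
  refine intervalIntegral.integral_congr_uIoo fun r hr => ?_
  have hr0 := ne_zero_of_mem_uIoo_zero_one hr
  obtain ⟨n, rfl⟩ := Nat.exists_eq_add_of_le' hm
  simp only [Vtest_radial_operator_eq (by omega : 2 ≤ n + 5) hr0, Fin.sum_univ_five, show n + 5 - 1 = n + 4 from rfl, show n + 5 - 2 = n + 3 from rfl,
    show n + 5 - 5 = n from rfl, show 2 * (n + 5) - 4 = 2 * n + 6 by omega]
  simp [radialCoeffs]
  field_simp
  ring

lemma integral_radial_Vtest_sq (hm : 5 ≤ m) :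
    ∫ r in (0 : ℝ)..1, r ^ (m - 1) * (Vtest m r ^ 2 / r ^ 4)
      = betaMoment (m - 5) (2 * m - 4 + 4) := by
  refine intervalIntegral.integral_congr_uIoo fun r hr => ?_
  have := ne_zero_of_mem_uIoo_zero_one hr
  obtain ⟨n, rfl⟩ := Nat.exists_eq_add_of_le' hm
  simp only [Vtest, show n + 5 - 1 = n + 4 from rfl, show n + 5 - 5 = n from rfl,
    show 2 * (n + 5) - 4 + 4 = 2 * (n + 5) by omega]
  field_simp
  ring

lemma integral_radial_secondVariation_eq (hm : 5 ≤ m) :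
    (∫ r in (0 : ℝ)..1, r ^ (m - 1) * (deriv (deriv (Vtest m)) r
        + ((m : ℝ) - 1) * deriv (Vtest m) r / r + 2 * ((m : ℝ) - 4) * Vtest m r / r ^ 2) ^ 2)
      + 32 * (2 - (m : ℝ)) * ∫ r in (0 : ℝ)..1, r ^ (m - 1) * (Vtest m r ^ 2 / r ^ 4)
      = 16 * m * (m - 1) * (m ^ 5 - 19 * m ^ 4 + 146 * m ^ 3 - 952 * m ^ 2 + 1408 * m - 384)
          / (5 * (5 * m - 4) * (5 * m - 6) * (5 * m - 8)) * betaMoment (m - 5) (2 * m - 4) := by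
  rw [integral_radial_operator_sq hm, integral_pow_mul_one_sub_sq_pow_mul_sum,
    integral_radial_Vtest_sq hm, betaMoment_add_right]
  obtain ⟨n, rfl⟩ := Nat.exists_eq_add_of_le' hm
  simp only [Fin.sum_univ_five, Fin.coe_ofNat_eq_mod, Nat.reduceMod,
    Finset.prod_range_succ, Finset.prod_range_zero, radialCoeffs,
    show n + 5 - 5 = n from rfl, show 2 * (n + 5) - 4 = 2 * n + 6 by omega]
  push_cast
  have hn : (0 : ℝ) ≤ n := n.cast_nonneg
  have h4 : 5 * ((n : ℝ) + 5) - 4 ≠ 0 := by linarith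
  have h6 : 5 * ((n : ℝ) + 5) - 6 ≠ 0 := by linarith
  have h8 : 5 * ((n : ℝ) + 5) - 8 ≠ 0 := by linarith
  field_simp
  ring

/-- The quintic changes sign between `12` and `13`: this is where the bound `m ≤ 12` comes from. -/
lemma quintic_neg {x : ℝ} (h5 : 5 ≤ x) (h12 : x ≤ 12) :
    x ^ 5 - 19 * x ^ 4 + 146 * x ^ 3 - 952 * x ^ 2 + 1408 * x - 384 < 0 := by
  nlinarith [mul_nonneg (sub_nonneg.2 h5) (sub_nonneg.2 h12), sq_nonneg (x - 8), sq_nonneg (x - 10),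
    mul_nonneg (mul_nonneg (sub_nonneg.2 h5) (sub_nonneg.2 h12)) (sq_nonneg (x - 9))]

lemma integral_radial_secondVariation_neg (hm : 5 ≤ m) (hm' : m ≤ 12) :
    (∫ r in (0 : ℝ)..1, r ^ (m - 1) * (deriv (deriv (Vtest m)) r
        + ((m : ℝ) - 1) * deriv (Vtest m) r / r + 2 * ((m : ℝ) - 4) * Vtest m r / r ^ 2) ^ 2)
      + 32 * (2 - (m : ℝ)) * (∫ r in (0 : ℝ)..1, r ^ (m - 1) * (Vtest m r ^ 2 / r ^ 4)) < 0 := by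
  rw [integral_radial_secondVariation_eq hm]
  have hm5 : (5 : ℝ) ≤ m := by exact_mod_cast hm
  have hden : 0 < 5 * (5 * (m : ℝ) - 4) * (5 * m - 6) * (5 * m - 8) :=
    mul_pos (mul_pos (mul_pos (by norm_num) (by linarith)) (by linarith)) (by linarith)
  exact mul_neg_of_neg_of_pos (div_neg_of_neg_of_pos (mul_neg_of_pos_of_neg
    (mul_pos (by positivity) (by linarith)) (quintic_neg hm5 (by exact_mod_cast hm'))) hden)
    (betaMoment_pos _ _)

end Radial

theorem stmt9 (m : ℕ) (hm : 5 ≤ m) (hm' : m ≤ 12) :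
    (∫ x in Metric.ball (0 : EuclideanSpace ℝ (Fin m)) 1,
        (deriv (deriv (Vtest m)) ‖x‖ + ((m : ℝ) - 1) * deriv (Vtest m) ‖x‖ / ‖x‖
          + 2 * ((m : ℝ) - 4) * Vtest m ‖x‖ / ‖x‖ ^ 2) ^ 2)
      + 32 * (2 - (m : ℝ)) *
        (∫ x in Metric.ball (0 : EuclideanSpace ℝ (Fin m)) 1,
          (Vtest m ‖x‖) ^ 2 / ‖x‖ ^ 4) < 0 := by
  have : NeZero m := ⟨by omega⟩
  rw [setIntegral_ball_fun_norm volume (fun r => (deriv (deriv (Vtest m)) r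
      + ((m : ℝ) - 1) * deriv (Vtest m) r / r + 2 * ((m : ℝ) - 4) * Vtest m r / r ^ 2) ^ 2),
    setIntegral_ball_fun_norm volume (fun r => Vtest m r ^ 2 / r ^ 4), finrank_euclideanSpace_fin]
  have hvol : 0 < (m : ℝ) * volume.real (Metric.ball (0 : EuclideanSpace ℝ (Fin m)) 1) :=
    mul_pos (by positivity) (ENNReal.toReal_pos (Metric.measure_ball_pos _ _ one_pos).ne'
      measure_ball_lt_top.ne)
  linarith [mul_neg_of_pos_of_neg hvol (integral_radial_secondVariation_neg hm hm')]
end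
end
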